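/- arXiv:math-ph/0610004 — 2 statements merged into one kernel-verified Lean document; each statement's English description precedes it below -/
import Mathlib

section
/- (Quaternion-frame evolution with Darboux vector) Let w : ℝ → ℝ³ be twice differentiable with a := w′ and b := w″, and suppose w(t) ≠ 0 and 𝛘_a(t) ≠ 0 for all t, where ŵ := w/|w|, 𝛘_a := (ŵ×a)/|w|, 𝛘̂_a := 𝛘_a/|𝛘_a| and 𝛘_b := (ŵ×b)/|w|. Define c_b := ŵ·(𝛘̂_a×𝛘_b) and the Darboux angular velocity vector 𝒟 := 𝛘_a + (c_b/|𝛘_a|) ŵ. Then the ortho-normal frame (ŵ, 𝛘̂_a, ŵ×𝛘̂_a) evolves by rigid rotation with angular velocity 𝒟: dŵ/dt = 𝒟 × ŵ, d𝛘̂_a/dt = 𝒟 × 𝛘̂_a, and d(ŵ×𝛘̂_a)/dt = 𝒟 × (ŵ×𝛘̂_a). -/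
open Matrix

/-- Euclidean magnitude of a vector in ℝ³. -/
noncomputable def mag (v : Fin 3 → ℝ) : ℝ := Real.sqrt (v ⬝ᵥ v)

/-- The unit tangent vector `ŵ := w/|w|` of a curve `w : ℝ → ℝ³`. -/
noncomputable def uhat (w : ℝ → Fin 3 → ℝ) (t : ℝ) : Fin 3 → ℝ := (mag (w t))⁻¹ • w t

/-- The growth rate `α_a := (ŵ·a)/|w|`, where `a := w′`. -/
noncomputable def alphaA (w : ℝ → Fin 3 → ℝ) (t : ℝ) : ℝ :=
  (uhat w t ⬝ᵥ deriv w t) / mag (w t)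

/-- The swing rate `𝛘_a := (ŵ×a)/|w|`, where `a := w′`. -/
noncomputable def chiA (w : ℝ → Fin 3 → ℝ) (t : ℝ) : Fin 3 → ℝ :=
  (mag (w t))⁻¹ • (uhat w t ⨯₃ deriv w t)

/-- `α_b := (ŵ·b)/|w|`, where `b := w″`. -/
noncomputable def alphaB (w : ℝ → Fin 3 → ℝ) (t : ℝ) : ℝ :=
  (uhat w t ⬝ᵥ deriv (deriv w) t) / mag (w t)

/-- `𝛘_b := (ŵ×b)/|w|`, where `b := w″`. -/
noncomputable def chiB (w : ℝ → Fin 3 → ℝ) (t : ℝ) : Fin 3 → ℝ :=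
  (mag (w t))⁻¹ • (uhat w t ⨯₃ deriv (deriv w) t)

/-- The unit vector `𝛘̂_a := 𝛘_a/|𝛘_a|`. -/
noncomputable def chiAhat (w : ℝ → Fin 3 → ℝ) (t : ℝ) : Fin 3 → ℝ :=
  (mag (chiA w t))⁻¹ • chiA w t

/-- The scalar `c_b := ŵ·(𝛘̂_a×𝛘_b)`. -/
noncomputable def cB (w : ℝ → Fin 3 → ℝ) (t : ℝ) : ℝ :=
  uhat w t ⬝ᵥ (chiAhat w t ⨯₃ chiB w t)

/-- The scalar `d_b := −(𝛘̂_a·𝛘_b)`. -/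
noncomputable def dB (w : ℝ → Fin 3 → ℝ) (t : ℝ) : ℝ :=
  -(chiAhat w t ⬝ᵥ chiB w t)

/-- The Darboux angular velocity vector `𝒟 := 𝛘_a + (c_b/|𝛘_a|) ŵ`. -/
noncomputable def darboux (w : ℝ → Fin 3 → ℝ) (t : ℝ) : Fin 3 → ℝ :=
  chiA w t + (cB w t / mag (chiA w t)) • uhat w t

/-! The direction `v/|v|` of a moving vector `v` turns with angular velocity
`(v × v′)/|v|²`, and adding a multiple of `v/|v|` to an angular velocity does not change its
action on `v/|v|`. For `v = w` this angular velocity is `𝛘_a`. For `v = 𝛘_a`, whose derivative is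
`𝛘_b − 2α_a 𝛘_a`, it is `(𝛘_a × 𝛘_b)/|𝛘_a|²`; since `𝛘_a` and `𝛘_b` are both orthogonal to `ŵ`,
this is the multiple `(c_b/|𝛘_a|) ŵ` of `ŵ`. In both cases `𝒟` differs from the angular velocity
by a multiple of the vector being turned. The third equation then follows from the Leibniz rule
`Ω × (e₁ × e₂) = (Ω × e₁) × e₂ + e₁ × (Ω × e₂)`. -/

theorem dotProduct_self_nonneg (v : Fin 3 → ℝ) : 0 ≤ v ⬝ᵥ v :=
  Finset.sum_nonneg fun i _ => mul_self_nonneg (v i)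

theorem mag_sq (v : Fin 3 → ℝ) : mag v ^ 2 = v ⬝ᵥ v :=
  Real.sq_sqrt (dotProduct_self_nonneg v)

theorem mag_pos {v : Fin 3 → ℝ} (hv : v ≠ 0) : 0 < mag v :=
  Real.sqrt_pos.2 <| (dotProduct_self_nonneg v).lt_of_ne' (dotProduct_self_eq_zero.not.2 hv)

theorem inv_mag_smul_dotProduct_self {v : Fin 3 → ℝ} (hv : v ≠ 0) :
    ((mag v)⁻¹ • v) ⬝ᵥ ((mag v)⁻¹ • v) = 1 := by
  have := (mag_pos hv).ne'
  rw [smul_dotProduct, dotProduct_smul, ← mag_sq, smul_eq_mul, smul_eq_mul]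
  field_simp

theorem cross_cross_cross_left (u p q : Fin 3 → ℝ) :
    (u ⨯₃ p) ⨯₃ (u ⨯₃ q) = (u ⬝ᵥ p ⨯₃ q) • u := by
  rw [cross_cross_eq_smul_sub_smul, dot_self_cross, triple_product_permutation p,
    ← cross_anticomm, dotProduct_neg]
  simp

noncomputable def swingRate (v v' : Fin 3 → ℝ) : Fin 3 → ℝ := (mag v ^ 2)⁻¹ • (v ⨯₃ v')

theorem swingRate_sub_smul_self (v v' : Fin 3 → ℝ) (c : ℝ) :
    swingRate v (v' - c • v) = swingRate v v' := by
  rw [swingRate, swingRate, map_sub, map_smul, cross_self, smul_zero, sub_zero]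

theorem inv_mag_smul_cross_eq_swingRate (v v' : Fin 3 → ℝ) :
    (mag v)⁻¹ • (((mag v)⁻¹ • v) ⨯₃ v') = swingRate v v' := by
  rw [swingRate, map_smul, LinearMap.smul_apply, smul_smul, ← mul_inv, ← sq]

section Calculus

variable {f g : ℝ → Fin 3 → ℝ} {f' g' : Fin 3 → ℝ} {t : ℝ}

theorem HasDerivAt.dotProduct (hf : HasDerivAt f f' t) (hg : HasDerivAt g g' t) :
    HasDerivAt (fun s => f s ⬝ᵥ g s) (f t ⬝ᵥ g' + f' ⬝ᵥ g t) t :=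
  (dotProductBilin ℝ ℝ).toContinuousBilinearMap.hasDerivAt_of_bilinear (fun _ => hf) (fun _ => hg)

theorem HasDerivAt.cross (hf : HasDerivAt f f' t) (hg : HasDerivAt g g' t) :
    HasDerivAt (fun s => f s ⨯₃ g s) (f t ⨯₃ g' + f' ⨯₃ g t) t :=
  crossProduct.toContinuousBilinearMap.hasDerivAt_of_bilinear (fun _ => hf) (fun _ => hg)

theorem HasDerivAt.cross_of_rotation {e₁ e₂ : ℝ → Fin 3 → ℝ} {Ω : Fin 3 → ℝ}
    (h₁ : HasDerivAt e₁ (Ω ⨯₃ e₁ t) t) (h₂ : HasDerivAt e₂ (Ω ⨯₃ e₂ t) t) :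
    HasDerivAt (fun s => e₁ s ⨯₃ e₂ s) (Ω ⨯₃ (e₁ t ⨯₃ e₂ t)) t :=
  (h₁.cross h₂).congr_deriv (by rw [leibniz_cross Ω, add_comm])

theorem HasDerivAt.mag (hf : HasDerivAt f f' t) (h0 : f t ≠ 0) :
    HasDerivAt (fun s => mag (f s)) ((f t ⬝ᵥ f') / mag (f t)) t := by
  refine ((hf.dotProduct hf).sqrt (dotProduct_self_eq_zero.not.2 h0)).congr_deriv ?_
  rw [dotProduct_comm f']
  simp only [_root_.mag]
  ring

theorem HasDerivAt.normalize (hf : HasDerivAt f f' t) (h0 : f t ≠ 0) :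
    HasDerivAt (fun s => (_root_.mag (f s))⁻¹ • f s)
      (swingRate (f t) f' ⨯₃ ((_root_.mag (f t))⁻¹ • f t)) t := by
  have hm := (mag_pos h0).ne'
  refine (((hf.mag h0).inv hm).smul hf).congr_deriv ?_
  simp only [swingRate, Pi.inv_apply, map_smul, LinearMap.smul_apply,
    cross_cross_eq_smul_sub_smul]
  rw [← mag_sq, dotProduct_comm f']
  match_scalars <;> field_simp

theorem HasDerivAt.swingRate (hf : HasDerivAt f (g t) t) (hg : HasDerivAt g g' t)
    (h0 : f t ≠ 0) :
    HasDerivAt (fun s => swingRate (f s) (g s))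
      (swingRate (f t) g' -
        (2 * ((f t ⬝ᵥ g t) / _root_.mag (f t) ^ 2)) • swingRate (f t) (g t)) t := by
  have hm := (mag_pos h0).ne'
  simp only [_root_.swingRate, mag_sq]
  refine (((hf.dotProduct hf).inv (dotProduct_self_eq_zero.not.2 h0)).smul
    (hf.cross hg)).congr_deriv ?_
  rw [Pi.inv_apply, cross_self, add_zero, dotProduct_comm (g t)]
  match_scalars <;> field_simp
  ring

end Calculus

section Curve

variable (w : ℝ → Fin 3 → ℝ) (t : ℝ)

theorem chiA_eq_swingRate : chiA w t = swingRate (w t) (deriv w t) :=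
  inv_mag_smul_cross_eq_swingRate _ _

theorem chiB_eq_swingRate : chiB w t = swingRate (w t) (deriv (deriv w) t) :=
  inv_mag_smul_cross_eq_swingRate _ _

theorem alphaA_eq_dotProduct_div : alphaA w t = (w t ⬝ᵥ deriv w t) / mag (w t) ^ 2 := by
  rw [alphaA, uhat, smul_dotProduct, smul_eq_mul, sq, div_mul_eq_div_div, inv_mul_eq_div]

theorem darboux_cross_uhat : darboux w t ⨯₃ uhat w t = chiA w t ⨯₃ uhat w t := by
  rw [darboux, map_add, LinearMap.add_apply, map_smul, LinearMap.smul_apply, cross_self,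
    smul_zero, add_zero]

theorem darboux_cross_chiAhat :
    darboux w t ⨯₃ chiAhat w t = ((cB w t / mag (chiA w t)) • uhat w t) ⨯₃ chiAhat w t := by
  rw [darboux, map_add, LinearMap.add_apply, chiAhat, map_smul (crossProduct (chiA w t)),
    cross_self, smul_zero, zero_add]

variable {w t}

theorem hasDerivAt_chiA (hd : DifferentiableAt ℝ w t) (hd' : DifferentiableAt ℝ (deriv w) t)
    (hw : w t ≠ 0) : HasDerivAt (chiA w) (chiB w t - (2 * alphaA w t) • chiA w t) t := by
  rw [chiB_eq_swingRate, alphaA_eq_dotProduct_div, chiA_eq_swingRate, funext (chiA_eq_swingRate w)]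
  exact hd.hasDerivAt.swingRate hd'.hasDerivAt hw

theorem swingRate_chiA_chiB (hw : w t ≠ 0) :
    swingRate (chiA w t) (chiB w t) = (cB w t / mag (chiA w t)) • uhat w t := by
  have hchi : chiA w t ⨯₃ chiB w t =
      (mag (w t) ^ 2)⁻¹ • (uhat w t ⬝ᵥ deriv w t ⨯₃ deriv (deriv w) t) • uhat w t := by
    simp only [chiA, chiB, map_smul, LinearMap.smul_apply, cross_cross_cross_left, smul_smul]
    rw [← mul_assoc, ← mul_inv, ← sq]
  have huhat : uhat w t ⬝ᵥ uhat w t = 1 := inv_mag_smul_dotProduct_self hw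
  rw [swingRate, cB, chiAhat, map_smul, LinearMap.smul_apply, dotProduct_smul, hchi,
    dotProduct_smul, dotProduct_smul, huhat]
  match_scalars
  simp only [smul_eq_mul, mul_one]
  field_simp

end Curve

/-- Quaternion-frame evolution with Darboux vector: for a twice differentiable curve
`w : ℝ → ℝ³` with `w(t) ≠ 0` and `𝛘_a(t) ≠ 0`, the ortho-normal frame
`(ŵ, 𝛘̂_a, ŵ×𝛘̂_a)` evolves by rigid rotation with angular velocity
`𝒟 = 𝛘_a + (c_b/|𝛘_a|) ŵ`. -/
theorem quaternion_frame_evolution (w : ℝ → Fin 3 → ℝ)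
    (hd : Differentiable ℝ w) (hd' : Differentiable ℝ (deriv w))
    (hw : ∀ t, w t ≠ 0) (hchi : ∀ t, chiA w t ≠ 0) (t : ℝ) :
    HasDerivAt (uhat w) (darboux w t ⨯₃ uhat w t) t ∧
    HasDerivAt (chiAhat w) (darboux w t ⨯₃ chiAhat w t) t ∧
    HasDerivAt (fun s => uhat w s ⨯₃ chiAhat w s)
      (darboux w t ⨯₃ (uhat w t ⨯₃ chiAhat w t)) t := by
  have huhat : HasDerivAt (uhat w) (darboux w t ⨯₃ uhat w t) t := by
    rw [darboux_cross_uhat, chiA_eq_swingRate]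
    exact (hd t).hasDerivAt.normalize (hw t)
  have hchiAhat : HasDerivAt (chiAhat w) (darboux w t ⨯₃ chiAhat w t) t := by
    rw [darboux_cross_chiAhat, ← swingRate_chiA_chiB (hw t),
      ← swingRate_sub_smul_self _ _ (2 * alphaA w t)]
    exact (hasDerivAt_chiA (hd t) (hd' t) (hw t)).normalize (hchi t)
  exact ⟨huhat, hchiAhat, huhat.cross_of_rotation hchiAhat⟩
end

section
/- Let u : ℝ³ × ℝ → ℝ³ and p : ℝ³ × ℝ → ℝ be twice continuously differentiable and satisfy the Euler equation ∂u/∂t + (u·∇)u = −∇p, and let w : ℝ³ × ℝ → ℝ³ be continuously differentiable with ∂w/∂t + (u·∇)w = (w·∇)u. Then the stretching vector a := (w·∇)u satisfies ∂a/∂t + (u·∇)a = −P w, where P is the Hessian matrix of the pressure, P_{ij} = ∂²p/∂xᵢ∂xⱼ, and (P w)ᵢ = Σⱼ P_{ij} wⱼ. -/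
open Matrix

/-- Time partial derivative `∂f/∂t` of a scalar field `f : ℝ³ × ℝ → ℝ`. -/
noncomputable def pt (f : (Fin 3 → ℝ) × ℝ → ℝ) (z : (Fin 3 → ℝ) × ℝ) : ℝ :=
  fderiv ℝ f z (0, 1)

/-- Spatial partial derivative `∂f/∂xⱼ` of a scalar field `f : ℝ³ × ℝ → ℝ`. -/
noncomputable def pd (f : (Fin 3 → ℝ) × ℝ → ℝ) (j : Fin 3) (z : (Fin 3 → ℝ) × ℝ) : ℝ :=
  fderiv ℝ f z (Pi.single j 1, 0)

/-!
In space-time, the material derivative is the derivative along the vector field `V = (u, 1)`,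
and the stretching vector is `aᵢ = ∂_W uᵢ` for `W = (w, 0)`. The evolution equation for `w`
says exactly that the Lie bracket `[V, W]` vanishes, so by symmetry of second derivatives
`∂_V ∂_W uᵢ = ∂_W ∂_V uᵢ`, and by the Euler equation the right-hand side is
`-∂_W ∂ᵢ p = -(P w)ᵢ`.
-/

open VectorField

section LieBracket

variable {E F : Type*} [NormedAddCommGroup E] [NormedSpace ℝ E]
  [NormedAddCommGroup F] [NormedSpace ℝ F]

theorem fderiv_fderiv_apply_comm_of_lieBracket_eq_zero {f : E → F} {V W : E → E} {z : E}
    (hf : ContDiffAt ℝ 2 f z) (hV : DifferentiableAt ℝ V z) (hW : DifferentiableAt ℝ W z)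
    (hVW : lieBracket ℝ V W z = 0) :
    fderiv ℝ (fun y => fderiv ℝ f y (W y)) z (V z)
      = fderiv ℝ (fun y => fderiv ℝ f y (V y)) z (W z) := by
  have h := fderiv_apply_lieBracket hf (by simp) hW hV
  rwa [hVW, map_zero, eq_comm, sub_eq_zero] at h

theorem fderiv_fderiv_apply_comm {f : E → F} {z : E} (hf : ContDiffAt ℝ 2 f z) (v w : E) :
    fderiv ℝ (fun y => fderiv ℝ f y w) z v = fderiv ℝ (fun y => fderiv ℝ f y v) z w :=
  fderiv_fderiv_apply_comm_of_lieBracket_eq_zero (V := fun _ => v) (W := fun _ => w) hf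
    (differentiableAt_const v) (differentiableAt_const w) (by simp [lieBracket])

theorem VectorField.lieBracket_prodMk_const {G : Type*} [NormedAddCommGroup G]
    [NormedSpace ℝ G] {u w : F × G → F} {z : F × G}
    (hu : DifferentiableAt ℝ u z) (hw : DifferentiableAt ℝ w z) (c d : G) :
    lieBracket ℝ (fun y => (u y, c)) (fun y => (w y, d)) z
      = (fderiv ℝ w z (u z, c) - fderiv ℝ u z (w z, d), 0) := by
  simp [lieBracket, hu.fderiv_prodMk (differentiableAt_const c),
    hw.fderiv_prodMk (differentiableAt_const d)]

end LieBracket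

theorem ContinuousLinearMap.apply_prod_eq_sum {ι F : Type*} [Fintype ι] [DecidableEq ι]
    [NormedAddCommGroup F] [NormedSpace ℝ F] (L : (ι → ℝ) × ℝ →L[ℝ] F) (c : ι → ℝ) (s : ℝ) :
    L (c, s) = s • L (0, 1) + ∑ j, c j • L (Pi.single j 1, 0) := by
  have hdecomp : (c, s)
      = s • ((0 : ι → ℝ), (1 : ℝ)) + ∑ j, c j • ((Pi.single j 1 : ι → ℝ), (0 : ℝ)) := by
    ext <;> simp [Prod.fst_sum, Prod.snd_sum, Finset.sum_apply, Pi.single_apply]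
  rw [hdecomp, map_add, map_smul, map_sum]
  simp only [map_smul]

theorem sum_mul_pd (f : (Fin 3 → ℝ) × ℝ → ℝ) (c : Fin 3 → ℝ) (z : (Fin 3 → ℝ) × ℝ) :
    ∑ j, c j * pd f j z = fderiv ℝ f z (c, 0) := by
  rw [(fderiv ℝ f z).apply_prod_eq_sum]
  simp [pd]

theorem pt_add_sum_mul_pd (f : (Fin 3 → ℝ) × ℝ → ℝ) (c : Fin 3 → ℝ) (z : (Fin 3 → ℝ) × ℝ) :
    pt f z + ∑ j, c j * pd f j z = fderiv ℝ f z (c, 1) := by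
  rw [(fderiv ℝ f z).apply_prod_eq_sum]
  simp [pd, pt]

theorem pd_pd_comm {f : (Fin 3 → ℝ) × ℝ → ℝ} {z : (Fin 3 → ℝ) × ℝ} (hf : ContDiffAt ℝ 2 f z)
    (i j : Fin 3) : pd (fun y => pd f i y) j z = pd (fun y => pd f j y) i z :=
  fderiv_fderiv_apply_comm hf _ _

/-- If `u, p` are `C²` and satisfy the Euler equation `∂u/∂t + (u·∇)u = −∇p`, and the
`C¹` field `w` satisfies `∂w/∂t + (u·∇)w = (w·∇)u`, then the stretching vector
`a := (w·∇)u` satisfies `∂a/∂t + (u·∇)a = −P w`, where `P_{ij} = ∂²p/∂xᵢ∂xⱼ` is the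
pressure Hessian. -/
theorem stretching_vector_evolution (u : (Fin 3 → ℝ) × ℝ → Fin 3 → ℝ)
    (p : (Fin 3 → ℝ) × ℝ → ℝ) (w : (Fin 3 → ℝ) × ℝ → Fin 3 → ℝ)
    (hu : ContDiff ℝ 2 u) (hp : ContDiff ℝ 2 p) (hw : ContDiff ℝ 1 w)
    (heuler : ∀ z i, pt (fun y => u y i) z + ∑ j, u z j * pd (fun y => u y i) j z
        = -pd p i z)
    (hevol : ∀ z i, pt (fun y => w y i) z + ∑ j, u z j * pd (fun y => w y i) j z
        = ∑ j, w z j * pd (fun y => u y i) j z)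
    (z : (Fin 3 → ℝ) × ℝ) (i : Fin 3) :
    pt (fun y => ∑ k, w y k * pd (fun y' => u y' i) k y) z
        + ∑ j, u z j * pd (fun y => ∑ k, w y k * pd (fun y' => u y' i) k y) j z
      = -∑ j, pd (fun y => pd p j y) i z * w z j := by
  set V : (Fin 3 → ℝ) × ℝ → (Fin 3 → ℝ) × ℝ := fun y => (u y, 1)
  set W : (Fin 3 → ℝ) × ℝ → (Fin 3 → ℝ) × ℝ := fun y => (w y, 0)
  have hu' : Differentiable ℝ u := hu.differentiable (by norm_num)
  have hw' : Differentiable ℝ w := hw.differentiable one_ne_zero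
  have hbracket : lieBracket ℝ V W z = 0 := by
    rw [lieBracket_prodMk_const (hu' z) (hw' z)]
    ext k
    · have hk := hevol z k
      rw [pt_add_sum_mul_pd, sum_mul_pd] at hk
      simpa [fderiv_apply (hw' z), fderiv_apply (hu' z), sub_eq_zero] using hk
    · rfl
  have hmaterial_u : (fun y => fderiv ℝ (fun y' => u y' i) y (V y)) = fun y => -pd p i y :=
    funext fun y => by rw [← pt_add_sum_mul_pd]; exact heuler y i
  have hstretching : (fun y => ∑ k, w y k * pd (fun y' => u y' i) k y)
      = fun y => fderiv ℝ (fun y' => u y' i) y (W y) :=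
    funext fun y => sum_mul_pd _ _ _
  rw [hstretching, pt_add_sum_mul_pd,
    fderiv_fderiv_apply_comm_of_lieBracket_eq_zero (contDiff_pi.mp hu i).contDiffAt
      ((hu' z).prodMk (differentiableAt_const _)) ((hw' z).prodMk (differentiableAt_const _))
      hbracket,
    hmaterial_u, fderiv_fun_neg, _root_.neg_apply, ← sum_mul_pd]
  simp only [pd_pd_comm hp.contDiffAt i, mul_comm]
end
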